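/- A strategy ϑ* ∈ Θ_{t,T}(0) is optimal for the conditional mean-variance hedging problem V^H_t(x) = essinf_{ϑ∈Θ} E[(H − x − ∫_t^T ϑ_r dS_r)^2 | F_t] if and only if the process u ↦ V^H_u(x + ∫_t^u ϑ*_r dS_r), t ≤ u ≤ T, is a P-martingale; moreover, for every ϑ ∈ Θ the process u ↦ V^H_u(x + ∫_t^u ϑ_r dS_r) is a P-submartingale (martingale optimality principle). -/

import Mathlib

/-!
Closedness under minima makes the value `V_v(c)` the a.e. limit of a decreasing sequence of
conditional errors `E[(H - c - ∫_v^T ψ_n dS)² | F_v]`. Pasting `ϑ` on `[u, v]` with `ψ_n` gives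
strategies from `u`, so `V_u ≤ E[E[…|F_v]|F_u]`, and conditional monotone convergence yields the
submartingale inequality `V_u ≤ E[V_v | F_u]`. If `ϑ*` is optimal, `E[V_v]` is squeezed between
`E[V_u]` and the cost `E[(H - x - ∫_t^T ϑ* dS)²] = E[V_t]`, and a submartingale step with
non-decreasing expectation is a martingale step. Conversely, the martingale property from `t`
to `T` with `V_T(c) = E[(H - c)² | F_T]` identifies `V_t(x)` with the cost of `ϑ*`.
-/

open MeasureTheory Filter Topology

section EssInf

variable {Ω ι : Type*} {m : MeasurableSpace Ω} {μ : Measure Ω} {f : ι → Ω → ℝ}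

lemma exists_seq_antitone_le_of_directed
    (hdir : ∀ i j, ∃ k, f k ≤ᵐ[μ] fun ω => min (f i ω) (f j ω)) (ψ : ℕ → ι) :
    ∃ χ : ℕ → ι, (∀ᵐ ω ∂μ, Antitone fun n => f (χ n) ω) ∧ ∀ n, f (χ n) ≤ᵐ[μ] f (ψ n) := by
  choose k hk using hdir
  let χ : ℕ → ι := fun n => Nat.rec (ψ 0) (fun n i => k i (ψ (n + 1))) n
  refine ⟨χ, ?_, fun n => ?_⟩
  · filter_upwards [ae_all_iff.2 fun n => hk (χ n) (ψ (n + 1))] with ω hω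
    exact antitone_nat_of_succ_le fun n => (hω n).trans (min_le_left _ _)
  · cases n with
    | zero => exact EventuallyLE.refl _ _
    | succ n => exact (hk (χ n) (ψ (n + 1))).mono fun ω hω => hω.trans (min_le_right _ _)

lemma exists_seq_antitone_tendsto_integral_iInf [Nonempty ι]
    (hint : ∀ i, Integrable (f i) μ) (hbdd : BddBelow (Set.range fun i => ∫ ω, f i ω ∂μ))
    (hdir : ∀ i j, ∃ k, f k ≤ᵐ[μ] fun ω => min (f i ω) (f j ω)) :
    ∃ χ : ℕ → ι, (∀ᵐ ω ∂μ, Antitone fun n => f (χ n) ω) ∧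
      Tendsto (fun n => ∫ ω, f (χ n) ω ∂μ) atTop (𝓝 (⨅ i, ∫ ω, f i ω ∂μ)) := by
  set a := ⨅ i, ∫ ω, f i ω ∂μ
  have hψ : ∀ n : ℕ, ∃ i, ∫ ω, f i ω ∂μ < a + 1 / (n + 1) := fun n =>
    exists_lt_of_ciInf_lt (lt_add_of_pos_right _ Nat.one_div_pos_of_nat)
  choose ψ hψ using hψ
  obtain ⟨χ, hanti, hχψ⟩ := exists_seq_antitone_le_of_directed hdir ψ
  have hub : Tendsto (fun n : ℕ => a + 1 / ((n : ℝ) + 1)) atTop (𝓝 a) := by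
    simpa using tendsto_const_nhds.add (tendsto_one_div_add_atTop_nhds_zero_nat (𝕜 := ℝ))
  refine ⟨χ, hanti, tendsto_of_tendsto_of_tendsto_of_le_of_le tendsto_const_nhds hub
    (fun n => ciInf_le hbdd _) fun n => ?_⟩
  exact (integral_mono_ae (hint _) (hint _) (hχψ n)).trans (hψ n).le

/-- `min g (f i)` has the same integral as `g`, since it is again a limit of integrals
`≥ ⨅ i, ∫ f i`. -/
lemma ae_le_of_tendsto_integral_iInf (hint : ∀ i, Integrable (f i) μ)
    (hbdd : BddBelow (Set.range fun i => ∫ ω, f i ω ∂μ))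
    (hdir : ∀ i j, ∃ k, f k ≤ᵐ[μ] fun ω => min (f i ω) (f j ω))
    {χ : ℕ → ι} {g : Ω → ℝ} (hg : Integrable g μ)
    (hanti : ∀ᵐ ω ∂μ, Antitone fun n => f (χ n) ω)
    (htend : ∀ᵐ ω ∂μ, Tendsto (fun n => f (χ n) ω) atTop (𝓝 (g ω)))
    (hinf : Tendsto (fun n => ∫ ω, f (χ n) ω ∂μ) atTop (𝓝 (⨅ i, ∫ ω, f i ω ∂μ))) (i : ι) :
    g ≤ᵐ[μ] f i := by
  have hgi : Integrable (fun ω => min (g ω) (f i ω)) μ := hg.inf (hint i)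
  have hg_int : ∫ ω, g ω ∂μ = ⨅ i, ∫ ω, f i ω ∂μ :=
    tendsto_nhds_unique (integral_tendsto_of_tendsto_of_antitone (fun n => hint _) hg hanti htend)
      hinf
  have hmin : Tendsto (fun n => ∫ ω, min (f (χ n) ω) (f i ω) ∂μ) atTop
      (𝓝 (∫ ω, min (g ω) (f i ω) ∂μ)) :=
    integral_tendsto_of_tendsto_of_antitone (fun n => (hint _).inf (hint i)) hgi
      (hanti.mono fun ω h _ _ hnk => min_le_min_right _ (h hnk))
      (htend.mono fun ω h => h.min tendsto_const_nhds)
  have hle : ∫ ω, g ω ∂μ ≤ ∫ ω, min (g ω) (f i ω) ∂μ := hg_int ▸ ge_of_tendsto' hmin fun n => by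
    obtain ⟨k, hk⟩ := hdir (χ n) i
    exact (ciInf_le hbdd k).trans (integral_mono_ae (hint k) ((hint _).inf (hint i)) hk)
  have heq : (fun ω => min (g ω) (f i ω)) =ᵐ[μ] g :=
    (integral_eq_iff_of_ae_le hgi hg (ae_of_all _ fun ω => min_le_left _ _)).1
      ((integral_mono hgi hg fun ω => min_le_left _ _).antisymm hle)
  exact heq.mono fun ω h => h ▸ min_le_right _ _

variable [Nonempty ι] {V : Ω → ℝ}

theorem exists_seq_antitone_tendsto_of_ae_isGLB (hint : ∀ i, Integrable (f i) μ)
    (hnn : ∀ i, 0 ≤ᵐ[μ] f i) (hdir : ∀ i j, ∃ k, f k ≤ᵐ[μ] fun ω => min (f i ω) (f j ω))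
    (hle : ∀ i, V ≤ᵐ[μ] f i) (hglb : ∀ W : Ω → ℝ, (∀ i, W ≤ᵐ[μ] f i) → W ≤ᵐ[μ] V) :
    ∃ χ : ℕ → ι, (∀ᵐ ω ∂μ, Antitone fun n => f (χ n) ω) ∧
      ∀ᵐ ω ∂μ, Tendsto (fun n => f (χ n) ω) atTop (𝓝 (V ω)) := by
  have hbdd : BddBelow (Set.range fun i => ∫ ω, f i ω ∂μ) :=
    ⟨0, Set.forall_mem_range.2 fun i => integral_nonneg_of_ae (hnn i)⟩
  obtain ⟨χ, hanti, hinf⟩ := exists_seq_antitone_tendsto_integral_iInf hint hbdd hdir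
  have hχnn : ∀ᵐ ω ∂μ, ∀ n, 0 ≤ f (χ n) ω := ae_all_iff.2 fun n => hnn _
  set g : Ω → ℝ := fun ω => ⨅ n, f (χ n) ω
  have htend : ∀ᵐ ω ∂μ, Tendsto (fun n => f (χ n) ω) atTop (𝓝 (g ω)) := by
    filter_upwards [hanti, hχnn] with ω hω hω'
    exact tendsto_atTop_ciInf hω ⟨0, Set.forall_mem_range.2 hω'⟩
  have hg : Integrable g μ := by
    refine integrable_of_le_of_le
      (aestronglyMeasurable_of_tendsto_ae atTop (fun n => (hint _).1) htend) ?_ ?_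
      (integrable_zero _ _ μ) (hint (χ 0))
    · filter_upwards [hχnn] with ω hω using le_ciInf hω
    · filter_upwards [hχnn] with ω hω using ciInf_le ⟨0, Set.forall_mem_range.2 hω⟩ 0
  have hgV : g =ᵐ[μ] V := by
    refine (hglb g (ae_le_of_tendsto_integral_iInf hint hbdd hdir hg hanti htend hinf)).antisymm ?_
    filter_upwards [ae_all_iff.2 fun n => hle (χ n)] with ω hω using le_ciInf hω
  refine ⟨χ, hanti, ?_⟩
  filter_upwards [htend, hgV] with ω hω hgω
  rwa [← hgω]

theorem integrable_of_ae_isGLB (hint : ∀ i, Integrable (f i) μ)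
    (hnn : ∀ i, 0 ≤ᵐ[μ] f i) (hdir : ∀ i j, ∃ k, f k ≤ᵐ[μ] fun ω => min (f i ω) (f j ω))
    (hle : ∀ i, V ≤ᵐ[μ] f i) (hglb : ∀ W : Ω → ℝ, (∀ i, W ≤ᵐ[μ] f i) → W ≤ᵐ[μ] V) :
    Integrable V μ := by
  obtain ⟨χ, -, htend⟩ := exists_seq_antitone_tendsto_of_ae_isGLB hint hnn hdir hle hglb
  obtain ⟨i⟩ := ‹Nonempty ι›
  exact integrable_of_le_of_le
    (aestronglyMeasurable_of_tendsto_ae atTop (fun n => (hint _).1) htend) (hglb 0 hnn) (hle i)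
    (integrable_zero _ _ μ) (hint i)

end EssInf

section CondExp

variable {Ω : Type*} {m m₀ : MeasurableSpace Ω} {μ : Measure Ω}

theorem tendsto_condExp_of_antitone (hm : m ≤ m₀) [SigmaFinite (μ.trim hm)] {g : ℕ → Ω → ℝ}
    {G : Ω → ℝ} (hg : ∀ n, Integrable (g n) μ) (hG : Integrable G μ)
    (hanti : ∀ᵐ ω ∂μ, Antitone fun n => g n ω)
    (htend : ∀ᵐ ω ∂μ, Tendsto (fun n => g n ω) atTop (𝓝 (G ω))) :
    ∀ᵐ ω ∂μ, Tendsto (fun n => μ[g n | m] ω) atTop (𝓝 (μ[G | m] ω)) := by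
  have hGg : ∀ n, G ≤ᵐ[μ] g n := fun n => by
    filter_upwards [hanti, htend] with ω hω hω' using hω.le_of_tendsto hω' n
  have hsucc : ∀ n, g (n + 1) ≤ᵐ[μ] g n := fun n => hanti.mono fun ω hω => hω n.le_succ
  refine tendsto_of_integral_tendsto_of_antitone (fun n => integrable_condExp) integrable_condExp
    ?_ ?_ (ae_all_iff.2 fun n => condExp_mono hG (hg n) (hGg n))
  · simp_rw [integral_condExp hm]
    exact integral_tendsto_of_tendsto_of_antitone hg hG hanti htend
  · filter_upwards [ae_all_iff.2 fun n => condExp_mono (hg (n + 1)) (hg n) (hsucc n)] with ω hω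
    exact antitone_nat_of_succ_le hω

lemma integral_le_of_ae_le_condExp (hm : m ≤ m₀) [SigmaFinite (μ.trim hm)] {Y Z : Ω → ℝ}
    (hY : Integrable Y μ) (hle : Y ≤ᵐ[μ] μ[Z | m]) : ∫ ω, Y ω ∂μ ≤ ∫ ω, Z ω ∂μ :=
  (integral_mono_ae hY integrable_condExp hle).trans_eq (integral_condExp hm)

lemma ae_eq_condExp_of_ae_le_of_integral_le (hm : m ≤ m₀) [SigmaFinite (μ.trim hm)]
    {Y Z : Ω → ℝ} (hY : Integrable Y μ) (hle : Y ≤ᵐ[μ] μ[Z | m])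
    (hint : ∫ ω, Z ω ∂μ ≤ ∫ ω, Y ω ∂μ) : Y =ᵐ[μ] μ[Z | m] :=
  (integral_eq_iff_of_ae_le hY integrable_condExp hle).1 <|
    (integral_mono_ae hY integrable_condExp hle).antisymm (by rwa [integral_condExp hm])

end CondExp

section Hedging

variable {Ω Θ : Type*} {m : MeasurableSpace Ω}

noncomputable def condHedgingError (μ : Measure Ω) (F : Filtration ℝ m) (H : Ω → ℝ)
    (Gfrom : Θ → ℝ → ℝ → Ω → ℝ) (T u : ℝ) (c : Ω → ℝ) (ϑ : Θ) : Ω → ℝ :=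
  μ[fun ω => (H ω - c ω - Gfrom ϑ u T ω) ^ 2 | F u]

variable {μ : Measure Ω} {F : Filtration ℝ m} {T : ℝ} {H : Ω → ℝ} {Gfrom : Θ → ℝ → ℝ → Ω → ℝ}
  {V : ℝ → (Ω → ℝ) → Ω → ℝ}

lemma condHedgingError_nonneg (u : ℝ) (c : Ω → ℝ) (ϑ : Θ) :
    0 ≤ᵐ[μ] condHedgingError μ F H Gfrom T u c ϑ :=
  condExp_nonneg (ae_of_all _ fun _ => sq_nonneg _)

lemma Gfrom_self_eq_zero
    (hflow : ∀ ϑ a b c, a ≤ b → b ≤ c → ∀ ω, Gfrom ϑ a c ω = Gfrom ϑ a b ω + Gfrom ϑ b c ω)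
    (ϑ : Θ) (a : ℝ) (ω : Ω) : Gfrom ϑ a a ω = 0 := by
  linarith [hflow ϑ a a a le_rfl le_rfl ω]

lemma exists_Gfrom_concat
    (hflow : ∀ ϑ a b c, a ≤ b → b ≤ c → ∀ ω, Gfrom ϑ a c ω = Gfrom ϑ a b ω + Gfrom ϑ b c ω)
    (hpaste : ∀ (u : ℝ) (ϑ ψ : Θ), ∃ χ : Θ,
      (∀ a b, b ≤ u → Gfrom χ a b = Gfrom ϑ a b) ∧ (∀ b, u ≤ b → Gfrom χ u b = Gfrom ψ u b))
    {u v : ℝ} (huv : u ≤ v) (hvT : v ≤ T) (ϑ ψ : Θ) :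
    ∃ χ : Θ, ∀ ω, Gfrom χ u T ω = Gfrom ϑ u v ω + Gfrom ψ v T ω := by
  obtain ⟨χ, hbefore, hafter⟩ := hpaste v ϑ ψ
  exact ⟨χ, fun ω => by rw [hflow χ u v T huv hvT, hbefore u v le_rfl, hafter T hvT]⟩

variable [Nonempty Θ]

lemma integrable_value
    (hVle : ∀ u, u ≤ T → ∀ c ϑ, V u c ≤ᵐ[μ] condHedgingError μ F H Gfrom T u c ϑ)
    (hVglb : ∀ u, u ≤ T → ∀ c W, (∀ ϑ, W ≤ᵐ[μ] condHedgingError μ F H Gfrom T u c ϑ) →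
      W ≤ᵐ[μ] V u c)
    (hlat : ∀ u, u ≤ T → ∀ c (ϑ₁ ϑ₂ : Θ), ∃ ϑ₃, condHedgingError μ F H Gfrom T u c ϑ₃ ≤ᵐ[μ]
      fun ω => min (condHedgingError μ F H Gfrom T u c ϑ₁ ω)
        (condHedgingError μ F H Gfrom T u c ϑ₂ ω))
    {u : ℝ} (huT : u ≤ T) (c : Ω → ℝ) : Integrable (V u c) μ :=
  integrable_of_ae_isGLB (fun _ => integrable_condExp) (condHedgingError_nonneg u c)
    (hlat u huT c) (hVle u huT c) (hVglb u huT c)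

lemma value_terminal
    (hflow : ∀ ϑ a b c, a ≤ b → b ≤ c → ∀ ω, Gfrom ϑ a c ω = Gfrom ϑ a b ω + Gfrom ϑ b c ω)
    (hVle : ∀ u, u ≤ T → ∀ c ϑ, V u c ≤ᵐ[μ] condHedgingError μ F H Gfrom T u c ϑ)
    (hVglb : ∀ u, u ≤ T → ∀ c W, (∀ ϑ, W ≤ᵐ[μ] condHedgingError μ F H Gfrom T u c ϑ) →
      W ≤ᵐ[μ] V u c)
    (c : Ω → ℝ) : V T c =ᵐ[μ] μ[fun ω => (H ω - c ω) ^ 2 | F T] := by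
  have hcost : ∀ ϑ, condHedgingError μ F H Gfrom T T c ϑ = μ[fun ω => (H ω - c ω) ^ 2 | F T] :=
    fun ϑ => by simp only [condHedgingError, Gfrom_self_eq_zero hflow, sub_zero]
  obtain ⟨ϑ⟩ := ‹Nonempty Θ›
  exact (hcost ϑ ▸ hVle T le_rfl c ϑ).antisymm
    (hVglb T le_rfl c _ fun ϑ => (EventuallyEq.of_eq (hcost ϑ).symm).le)

variable [IsProbabilityMeasure μ]

lemma integral_value_le
    (hVle : ∀ u, u ≤ T → ∀ c ϑ, V u c ≤ᵐ[μ] condHedgingError μ F H Gfrom T u c ϑ)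
    (hVglb : ∀ u, u ≤ T → ∀ c W, (∀ ϑ, W ≤ᵐ[μ] condHedgingError μ F H Gfrom T u c ϑ) →
      W ≤ᵐ[μ] V u c)
    (hlat : ∀ u, u ≤ T → ∀ c (ϑ₁ ϑ₂ : Θ), ∃ ϑ₃, condHedgingError μ F H Gfrom T u c ϑ₃ ≤ᵐ[μ]
      fun ω => min (condHedgingError μ F H Gfrom T u c ϑ₁ ω)
        (condHedgingError μ F H Gfrom T u c ϑ₂ ω))
    {v : ℝ} (hvT : v ≤ T) (c : Ω → ℝ) (ϑ : Θ) :
    ∫ ω, V v c ω ∂μ ≤ ∫ ω, (H ω - c ω - Gfrom ϑ v T ω) ^ 2 ∂μ :=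
  integral_le_of_ae_le_condExp (F.le v) (integrable_value hVle hVglb hlat hvT c) (hVle v hvT c ϑ)

/-- Dynamic programming: pasting `ϑ` on `[u, v]` with a minimizing sequence for the value at
`v` bounds the value at `u`, and conditional monotone convergence passes to the limit. -/
theorem value_le_condExp_value
    (hflow : ∀ ϑ a b c, a ≤ b → b ≤ c → ∀ ω, Gfrom ϑ a c ω = Gfrom ϑ a b ω + Gfrom ϑ b c ω)
    (hpaste : ∀ (u : ℝ) (ϑ ψ : Θ), ∃ χ : Θ,
      (∀ a b, b ≤ u → Gfrom χ a b = Gfrom ϑ a b) ∧ (∀ b, u ≤ b → Gfrom χ u b = Gfrom ψ u b))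
    (hVle : ∀ u, u ≤ T → ∀ c ϑ, V u c ≤ᵐ[μ] condHedgingError μ F H Gfrom T u c ϑ)
    (hVglb : ∀ u, u ≤ T → ∀ c W, (∀ ϑ, W ≤ᵐ[μ] condHedgingError μ F H Gfrom T u c ϑ) →
      W ≤ᵐ[μ] V u c)
    (hlat : ∀ u, u ≤ T → ∀ c (ϑ₁ ϑ₂ : Θ), ∃ ϑ₃, condHedgingError μ F H Gfrom T u c ϑ₃ ≤ᵐ[μ]
      fun ω => min (condHedgingError μ F H Gfrom T u c ϑ₁ ω)
        (condHedgingError μ F H Gfrom T u c ϑ₂ ω))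
    {u v : ℝ} (huv : u ≤ v) (hvT : v ≤ T) (c : Ω → ℝ) (ϑ : Θ) :
    V u c ≤ᵐ[μ] μ[V v (fun ω => c ω + Gfrom ϑ u v ω) | F u] := by
  set c' : Ω → ℝ := fun ω => c ω + Gfrom ϑ u v ω
  obtain ⟨χ, hanti, htend⟩ := exists_seq_antitone_tendsto_of_ae_isGLB
    (fun _ => integrable_condExp) (condHedgingError_nonneg v c') (hlat v hvT c')
    (hVle v hvT c') (hVglb v hvT c')
  have hbound : ∀ n, V u c ≤ᵐ[μ] μ[condHedgingError μ F H Gfrom T v c' (χ n) | F u] := by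
    intro n
    obtain ⟨χ', hχ'⟩ := exists_Gfrom_concat hflow hpaste huv hvT ϑ (χ n)
    have hcost : (fun ω => (H ω - c ω - Gfrom χ' u T ω) ^ 2) =
        fun ω => (H ω - c' ω - Gfrom (χ n) v T ω) ^ 2 := by
      funext ω
      rw [hχ']
      ring
    have hle := hVle u (huv.trans hvT) c χ'
    rw [condHedgingError, hcost] at hle
    exact hle.trans (condExp_condExp_of_le (F.mono huv) (F.le v)).symm.le
  filter_upwards [tendsto_condExp_of_antitone (F.le u) (fun _ => integrable_condExp)
    (integrable_value hVle hVglb hlat hvT c') hanti htend, ae_all_iff.2 hbound] with ω hω hω'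
  exact ge_of_tendsto' hω hω'

end Hedging

theorem martingale_optimality_principle
    {Ω : Type*} {m : MeasurableSpace Ω} (μ : Measure Ω) [IsProbabilityMeasure μ]
    (F : Filtration ℝ m) (T : ℝ)
    (H : Ω → ℝ) (x : ℝ) (t : ℝ) (htT : t ≤ T)
    (Θ : Type*) (Gfrom : Θ → ℝ → ℝ → Ω → ℝ)
    (hflow : ∀ ϑ a b c, a ≤ b → b ≤ c → ∀ ω,
      Gfrom ϑ a c ω = Gfrom ϑ a b ω + Gfrom ϑ b c ω)
    (hpaste : ∀ (u : ℝ) (ϑ ψ : Θ), ∃ χ : Θ,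
      (∀ a b, b ≤ u → Gfrom χ a b = Gfrom ϑ a b) ∧
      (∀ b, u ≤ b → Gfrom χ u b = Gfrom ψ u b))
    (V : ℝ → (Ω → ℝ) → Ω → ℝ)
    (hVle : ∀ u, u ≤ T → ∀ c : Ω → ℝ, ∀ ϑ : Θ,
      V u c ≤ᵐ[μ] μ[fun ω => (H ω - c ω - Gfrom ϑ u T ω) ^ 2 | F u])
    (hVglb : ∀ u, u ≤ T → ∀ c : Ω → ℝ, ∀ W : Ω → ℝ,
      (∀ ϑ : Θ, W ≤ᵐ[μ] μ[fun ω => (H ω - c ω - Gfrom ϑ u T ω) ^ 2 | F u]) →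
      W ≤ᵐ[μ] V u c)
    (hlat : ∀ u, u ≤ T → ∀ (c : Ω → ℝ) (ϑ₁ ϑ₂ : Θ), ∃ ϑ₃ : Θ,
      μ[fun ω => (H ω - c ω - Gfrom ϑ₃ u T ω) ^ 2 | F u] ≤ᵐ[μ]
        fun ω => min ((μ[fun ω' => (H ω' - c ω' - Gfrom ϑ₁ u T ω') ^ 2 | F u]) ω)
                     ((μ[fun ω' => (H ω' - c ω' - Gfrom ϑ₂ u T ω') ^ 2 | F u]) ω))
    (ϑstar : Θ) :
    -- (1) submartingale property of the value along any strategy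
    (∀ ϑ : Θ, ∀ u v, t ≤ u → u ≤ v → v ≤ T →
      V u (fun ω => x + Gfrom ϑ t u ω) ≤ᵐ[μ]
        μ[V v (fun ω => x + Gfrom ϑ t v ω) | F u]) ∧
    -- (2) ϑ* is optimal for V^H_t(x) iff the value along ϑ* is a martingale on [t,T]
    ((V t (fun _ => x) =ᵐ[μ]
        μ[fun ω => (H ω - x - Gfrom ϑstar t T ω) ^ 2 | F t]) ↔
      (∀ u v, t ≤ u → u ≤ v → v ≤ T →
        V u (fun ω => x + Gfrom ϑstar t u ω) =ᵐ[μ]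
          μ[V v (fun ω => x + Gfrom ϑstar t v ω) | F u])) := by
  have : Nonempty Θ := ⟨ϑstar⟩
  have hstart : ∀ ϑ, (fun ω => x + Gfrom ϑ t t ω) = fun _ => x := fun ϑ => by
    simp only [Gfrom_self_eq_zero hflow, add_zero]
  have hsub : ∀ ϑ u v, t ≤ u → u ≤ v → v ≤ T → V u (fun ω => x + Gfrom ϑ t u ω) ≤ᵐ[μ]
      μ[V v (fun ω => x + Gfrom ϑ t v ω) | F u] := fun ϑ u v htu huv hvT => by
    simpa only [add_assoc, ← hflow ϑ t u v htu huv] using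
      value_le_condExp_value hflow hpaste hVle hVglb hlat huv hvT (fun ω => x + Gfrom ϑ t u ω) ϑ
  refine ⟨hsub, fun hopt u v htu huv hvT => ?_, fun hmart => ?_⟩
  · refine ae_eq_condExp_of_ae_le_of_integral_le (F.le u)
      (integrable_value hVle hVglb hlat (huv.trans hvT) _) (hsub ϑstar u v htu huv hvT) ?_
    calc ∫ ω, V v (fun ω => x + Gfrom ϑstar t v ω) ω ∂μ
        ≤ ∫ ω, (H ω - (x + Gfrom ϑstar t v ω) - Gfrom ϑstar v T ω) ^ 2 ∂μ :=
          integral_value_le hVle hVglb hlat hvT _ ϑstar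
      _ = ∫ ω, (H ω - x - Gfrom ϑstar t T ω) ^ 2 ∂μ := by
          simp only [hflow ϑstar t v T (htu.trans huv) hvT, sub_add_eq_sub_sub]
      _ = ∫ ω, V t (fun _ => x) ω ∂μ := by rw [integral_congr_ae hopt, integral_condExp (F.le t)]
      _ ≤ ∫ ω, V u (fun ω => x + Gfrom ϑstar t u ω) ω ∂μ :=
          integral_le_of_ae_le_condExp (F.le t) (integrable_value hVle hVglb hlat htT _)
            (hstart ϑstar ▸ hsub ϑstar t u le_rfl htu (huv.trans hvT))
  · calc V t (fun _ => x)
        =ᵐ[μ] μ[V T (fun ω => x + Gfrom ϑstar t T ω) | F t] :=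
          hstart ϑstar ▸ hmart t T le_rfl htT le_rfl
      _ =ᵐ[μ] μ[μ[fun ω => (H ω - (x + Gfrom ϑstar t T ω)) ^ 2 | F T] | F t] :=
          condExp_congr_ae (value_terminal hflow hVle hVglb _)
      _ =ᵐ[μ] μ[fun ω => (H ω - x - Gfrom ϑstar t T ω) ^ 2 | F t] := by
          simpa only [sub_add_eq_sub_sub] using condExp_condExp_of_le (F.mono htT) (F.le T)
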